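/- Fix n ∈ ℕ, p ≥ 1, a block decomposition k of {1, …, n}, R > 0, and ε > 0. Let C_ε = [0, ε]^n and L_ε = {x ∈ (εℤ)^n : C_ε + x ⊆ B^n_{p,k}(R)}. Then the translates {C_ε + x : x ∈ L_ε} cover the superball B^n_{p,k}(R − 2 n^{(p+2)/(2p)} ε): every y ∈ ℝ^n with ‖y‖_{p,k,n} ≤ R − 2 n^{(p+2)/(2p)} ε lies in C_ε + x for some x ∈ L_ε. -/
import Mathlib


open MeasureTheory Filter
open scoped BigOperators ENNReal

/-- The superball norm on `ℝ^n` associated to exponent `p` and a block decomposition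
given by `m` blocks with endpoints `k 0 = 0 < k 1 < ⋯ < k m = n`:
`‖x‖ = (∑_{j<m} ‖(x_{k j}, …, x_{k (j+1) - 1})‖₂^p)^(1/p)`. -/
noncomputable def superNorm (p : ℝ) {n : ℕ} (m : ℕ) (k : ℕ → ℕ) (x : Fin n → ℝ) : ℝ :=
  (∑ j ∈ Finset.range m,
      (Real.sqrt (∑ i : Fin n, if k j ≤ (i : ℕ) ∧ (i : ℕ) < k (j + 1) then x i ^ 2 else 0)) ^ p)
    ^ (1 / p)

/-- `k` is a block decomposition of `{1, …, n}` into `m` blocks. -/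
def IsBlockDecomp (n m : ℕ) (k : ℕ → ℕ) : Prop :=
  0 < m ∧ k 0 = 0 ∧ k m = n ∧ ∀ j < m, k j < k (j + 1)

/-- The superball with center `c` and radius `r`. -/
noncomputable def superBall (p : ℝ) {n : ℕ} (m : ℕ) (k : ℕ → ℕ) (c : Fin n → ℝ) (r : ℝ) :
    Set (Fin n → ℝ) :=
  {y | superNorm p m k (y - c) ≤ r}

/-- `P` is the set of centers of a translative packing of superballs of radius `r`. -/
def IsSuperballPacking (p : ℝ) {n : ℕ} (m : ℕ) (k : ℕ → ℕ) (r : ℝ)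
    (P : Set (Fin n → ℝ)) : Prop :=
  ∀ x ∈ P, ∀ y ∈ P, x ≠ y → 2 * r ≤ superNorm p m k (x - y)

/-- The translative packing density of superballs of radius `r` in `ℝ^n`. -/
noncomputable def packingDensity (p : ℝ) (n m : ℕ) (k : ℕ → ℕ) (r : ℝ) : ℝ :=
  limsup (fun R : ℝ =>
      ⨆ P : {P : Set (Fin n → ℝ) // IsSuperballPacking p m k r P},
        (volume ((⋃ x ∈ P.1, superBall p m k x r) ∩ superBall p m k 0 R)).toReal /
          (volume (superBall p m k (0 : Fin n → ℝ) R)).toReal) atTop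

/-- The canonical hard superball model partition function `Ẑ_S(t)`. -/
noncomputable def Zhat (p : ℝ) {n : ℕ} (m : ℕ) (k : ℕ → ℕ) (r : ℝ) (S : Set (Fin n → ℝ))
    (t : ℕ) : ℝ :=
  ((t.factorial : ℝ))⁻¹ *
    ∫ x : Fin t → Fin n → ℝ in Set.univ.pi fun _ => S,
      Set.indicator
        {y : Fin t → Fin n → ℝ | ∀ i j : Fin t, i ≠ j → 2 * r ≤ superNorm p m k (y i - y j)}
        (fun _ => (1 : ℝ)) x

/-- The grand canonical hard superball model partition function `Z_S(λ)`. -/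
noncomputable def Zgc (p : ℝ) {n : ℕ} (m : ℕ) (k : ℕ → ℕ) (r : ℝ) (S : Set (Fin n → ℝ))
    (lam : ℝ) : ℝ :=
  ∑' t : ℕ, lam ^ t * Zhat p m k r S t

/-- The expected packing density `α_S(λ)` of the hard superball model. -/
noncomputable def alphaDen (p : ℝ) {n : ℕ} (m : ℕ) (k : ℕ → ℕ) (r : ℝ) (S : Set (Fin n → ℝ))
    (lam : ℝ) : ℝ :=
  lam * deriv (Zgc p m k r S) lam / ((volume S).toReal * Zgc p m k r S lam)


lemma sqrt_sum_sq_add_le {ι : Type*} (s : Finset ι) (f g : ι → ℝ) :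
    Real.sqrt (∑ i ∈ s, (f i + g i) ^ 2) ≤
      Real.sqrt (∑ i ∈ s, f i ^ 2) + Real.sqrt (∑ i ∈ s, g i ^ 2) := by
  set A := Real.sqrt (∑ i ∈ s, f i ^ 2) with hA
  set B := Real.sqrt (∑ i ∈ s, g i ^ 2) with hB
  have hA0 : 0 ≤ A := Real.sqrt_nonneg _
  have hB0 : 0 ≤ B := Real.sqrt_nonneg _
  have hAsq : A ^ 2 = ∑ i ∈ s, f i ^ 2 :=
    Real.sq_sqrt (Finset.sum_nonneg fun i _ => sq_nonneg _)
  have hBsq : B ^ 2 = ∑ i ∈ s, g i ^ 2 :=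
    Real.sq_sqrt (Finset.sum_nonneg fun i _ => sq_nonneg _)
  have hCS : ∑ i ∈ s, f i * g i ≤ A * B := Real.sum_mul_le_sqrt_mul_sqrt s f g
  have hexp : (∑ i ∈ s, (f i + g i) ^ 2)
      = (∑ i ∈ s, f i ^ 2) + 2 * (∑ i ∈ s, f i * g i) + (∑ i ∈ s, g i ^ 2) := by
    rw [Finset.mul_sum, ← Finset.sum_add_distrib, ← Finset.sum_add_distrib]
    exact Finset.sum_congr rfl fun i _ => by ring
  have h1 : (∑ i ∈ s, (f i + g i) ^ 2) ≤ (A + B) ^ 2 := by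
    rw [hexp]; nlinarith
  calc Real.sqrt (∑ i ∈ s, (f i + g i) ^ 2) ≤ Real.sqrt ((A + B) ^ 2) := Real.sqrt_le_sqrt h1
    _ = A + B := Real.sqrt_sq (by linarith)

lemma superNorm_add_le (p : ℝ) (hp : 1 ≤ p) {n : ℕ} (m : ℕ) (k : ℕ → ℕ) (a b : Fin n → ℝ) :
    superNorm p m k (a + b) ≤ superNorm p m k a + superNorm p m k b := by
  set s : (Fin n → ℝ) → ℕ → ℝ := fun v j =>
    Real.sqrt (∑ i : Fin n, if k j ≤ (i : ℕ) ∧ (i : ℕ) < k (j + 1) then v i ^ 2 else 0) with hs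
  have hkey : ∀ j, s (a + b) j ≤ s a j + s b j := by
    intro j
    rw [hs]
    simp only
    have e1 : (∑ i : Fin n, if k j ≤ (i : ℕ) ∧ (i : ℕ) < k (j + 1) then (a + b) i ^ 2 else 0)
        = ∑ i : Fin n, ((if k j ≤ (i : ℕ) ∧ (i : ℕ) < k (j + 1) then a i else 0)
            + (if k j ≤ (i : ℕ) ∧ (i : ℕ) < k (j + 1) then b i else 0)) ^ 2 := by
      refine Finset.sum_congr rfl fun i _ => ?_
      by_cases h : k j ≤ (i : ℕ) ∧ (i : ℕ) < k (j + 1) <;> simp [h]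
    have e2 : ∀ v : Fin n → ℝ,
        (∑ i : Fin n, if k j ≤ (i : ℕ) ∧ (i : ℕ) < k (j + 1) then v i ^ 2 else 0)
        = ∑ i : Fin n, (if k j ≤ (i : ℕ) ∧ (i : ℕ) < k (j + 1) then v i else 0) ^ 2 := by
      intro v
      refine Finset.sum_congr rfl fun i _ => ?_
      by_cases h : k j ≤ (i : ℕ) ∧ (i : ℕ) < k (j + 1) <;> simp [h]
    rw [e1, e2 a, e2 b]
    exact sqrt_sum_sq_add_le Finset.univ _ _
  have hp0 : (0:ℝ) ≤ 1 / p := by positivity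
  have hpp : (0:ℝ) ≤ p := by linarith
  calc superNorm p m k (a + b)
      ≤ (∑ j ∈ Finset.range m, (s a j + s b j) ^ p) ^ (1 / p) := by
        apply Real.rpow_le_rpow
        · exact Finset.sum_nonneg fun j _ => Real.rpow_nonneg (Real.sqrt_nonneg _) _
        · exact Finset.sum_le_sum fun j _ =>
            Real.rpow_le_rpow (Real.sqrt_nonneg _) (hkey j) hpp
        · exact hp0
    _ ≤ superNorm p m k a + superNorm p m k b :=
        Real.Lp_add_le_of_nonneg _ hp (fun j _ => Real.sqrt_nonneg _)
          (fun j _ => Real.sqrt_nonneg _)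

lemma superNorm_le_of_abs_le (p : ℝ) (hp : 1 ≤ p) {n : ℕ} (hn : 0 < n) (m : ℕ) (hm : m ≤ n)
    (k : ℕ → ℕ) (ε : ℝ) (hε : 0 ≤ ε) (v : Fin n → ℝ) (hv : ∀ i, |v i| ≤ ε) :
    superNorm p m k v ≤ (n : ℝ) ^ ((p + 2) / (2 * p)) * ε := by
  have hp0 : p ≠ 0 := by positivity
  have hppos : (0:ℝ) < p := by linarith
  have hn0 : (0:ℝ) < (n : ℝ) := by exact_mod_cast hn
  set t : ℝ := Real.sqrt n * ε with ht
  have htn : 0 ≤ t := mul_nonneg (Real.sqrt_nonneg _) hε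
  have hblock : ∀ j : ℕ,
      Real.sqrt (∑ i : Fin n, if k j ≤ (i : ℕ) ∧ (i : ℕ) < k (j + 1) then v i ^ 2 else 0) ≤ t := by
    intro j
    have h1 : (∑ i : Fin n, if k j ≤ (i : ℕ) ∧ (i : ℕ) < k (j + 1) then v i ^ 2 else 0)
        ≤ ∑ _i : Fin n, ε ^ 2 := by
      refine Finset.sum_le_sum fun i _ => ?_
      have h2 : v i ^ 2 ≤ ε ^ 2 := by
        have := hv i
        have := abs_nonneg (v i)
        nlinarith [sq_abs (v i)]
      split <;> [exact h2; positivity]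
    calc Real.sqrt _ ≤ Real.sqrt (∑ _i : Fin n, ε ^ 2) := Real.sqrt_le_sqrt h1
      _ = t := by
          rw [Finset.sum_const, Finset.card_univ, Fintype.card_fin, nsmul_eq_mul, ht,
            Real.sqrt_mul (by positivity), Real.sqrt_sq hε]
  have hsum : (∑ j ∈ Finset.range m,
      (Real.sqrt (∑ i : Fin n, if k j ≤ (i : ℕ) ∧ (i : ℕ) < k (j + 1) then v i ^ 2 else 0)) ^ p)
      ≤ (n : ℝ) * t ^ p := by
    calc _ ≤ ∑ _j ∈ Finset.range m, t ^ p :=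
          Finset.sum_le_sum fun j _ =>
            Real.rpow_le_rpow (Real.sqrt_nonneg _) (hblock j) (le_of_lt hppos)
      _ = (m : ℝ) * t ^ p := by rw [Finset.sum_const, Finset.card_range, nsmul_eq_mul]
      _ ≤ (n : ℝ) * t ^ p := by
          have : (m : ℝ) ≤ (n : ℝ) := by exact_mod_cast hm
          exact mul_le_mul_of_nonneg_right this (Real.rpow_nonneg htn _)
  have hmain : superNorm p m k v ≤ ((n : ℝ) * t ^ p) ^ (1 / p) :=
    Real.rpow_le_rpow
      (Finset.sum_nonneg fun j _ => Real.rpow_nonneg (Real.sqrt_nonneg _) _) hsum (by positivity)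
  have hexp : 1 / p + 1 / 2 = (p + 2) / (2 * p) := by field_simp; ring
  have heq : ((n : ℝ) * t ^ p) ^ (1 / p) = (n : ℝ) ^ ((p + 2) / (2 * p)) * ε := by
    rw [Real.mul_rpow (le_of_lt hn0) (Real.rpow_nonneg htn _),
      ← Real.rpow_mul htn, mul_one_div_cancel hp0, Real.rpow_one, ht,
      Real.sqrt_eq_rpow, ← mul_assoc, ← Real.rpow_add hn0, hexp]
  rw [heq] at hmain
  exact hmain

lemma blockDecomp_le {n m : ℕ} {k : ℕ → ℕ} (hk : IsBlockDecomp n m k) : m ≤ n := by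
  obtain ⟨hm, h0, hn, hstep⟩ := hk
  have key : ∀ j, j ≤ m → j ≤ k j := by
    intro j
    induction j with
    | zero => omega
    | succ j ih =>
      intro hj
      have h1 := ih (by omega)
      have h2 := hstep j (by omega)
      omega
  have := key m le_rfl
  omega


/-- **Lemma 11 (cube covering).**
Fix `p ≥ 1`, a block decomposition `k` of `{1, …, n}`, `R > 0` and `ε > 0`. Every point
`y` of the superball of radius `R - 2 n^{(p+2)/(2p)} ε` lies in a translate `C_ε + x` of
the cube `C_ε = [0, ε]^n` by a lattice point `x ∈ (εℤ)^n` with `C_ε + x ⊆ B^n_{p,k}(R)`. -/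
theorem cube_translates_cover (p : ℝ) (hp : 1 ≤ p) (n m : ℕ) (k : ℕ → ℕ)
    (hk : IsBlockDecomp n m k) (R ε : ℝ) (hR : 0 < R) (hε : 0 < ε)
    (y : Fin n → ℝ)
    (hy : superNorm p m k y ≤ R - 2 * (n : ℝ) ^ ((p + 2) / (2 * p)) * ε) :
    ∃ x : Fin n → ℝ, (∀ i, ∃ z : ℤ, x i = ε * z) ∧
      {w : Fin n → ℝ | ∀ i, w i - x i ∈ Set.Icc (0 : ℝ) ε} ⊆
        superBall p m k (0 : Fin n → ℝ) R ∧
      ∀ i, y i - x i ∈ Set.Icc (0 : ℝ) ε := by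
  have hmn : m ≤ n := blockDecomp_le hk
  have hn : 0 < n := lt_of_lt_of_le hk.1 hmn
  set C : ℝ := (n : ℝ) ^ ((p + 2) / (2 * p)) with hC
  have hC0 : 0 ≤ C := Real.rpow_nonneg (Nat.cast_nonneg n) _
  refine ⟨fun i => ε * ⌊y i / ε⌋, fun i => ⟨⌊y i / ε⌋, rfl⟩, ?_, ?_⟩
  · intro w hw
    simp only [Set.mem_setOf_eq] at hw
    show superNorm p m k (w - 0) ≤ R
    rw [sub_zero]
    have hwy : ∀ i, |w i - y i| ≤ ε := by
      intro i
      have h1 := hw i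
      have h2 : y i - ε * ⌊y i / ε⌋ = ε * Int.fract (y i / ε) := by
        rw [Int.fract]; field_simp
      have h3 : (0:ℝ) ≤ Int.fract (y i / ε) := Int.fract_nonneg _
      have h4 : Int.fract (y i / ε) < 1 := Int.fract_lt_one _
      simp only [Set.mem_Icc] at h1
      rw [abs_le]
      constructor <;> nlinarith
    have hsplit : w = y + (w - y) := by funext i; simp
    calc superNorm p m k w ≤ superNorm p m k y + superNorm p m k (w - y) := by
          have h := superNorm_add_le p hp m k y (w - y)
          rw [← hsplit] at h; exact h
      _ ≤ (R - 2 * C * ε) + C * ε := by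
          refine add_le_add hy ?_
          exact superNorm_le_of_abs_le p hp hn m hmn k ε (le_of_lt hε) _ hwy
      _ ≤ R := by nlinarith
  · intro i
    have h2 : y i - ε * ⌊y i / ε⌋ = ε * Int.fract (y i / ε) := by
      rw [Int.fract]; field_simp
    have h3 : (0:ℝ) ≤ Int.fract (y i / ε) := Int.fract_nonneg _
    have h4 : Int.fract (y i / ε) < 1 := Int.fract_lt_one _
    simp only [Set.mem_Icc]
    constructor <;> nlinarith
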